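/- Let m, n₁, n₂, p be positive integers, let l : Fin m → Fin p be a map, and let V₁ and V₂ be m×n₁ and m×n₂ complex matrices. For a ∈ ℂ^p, let D_a denote the m×m diagonal matrix whose t-th diagonal entry is a(l(t)). If the set {(a, b) ∈ ℂ^p × ℂ^p : the column span of D_a V₁ is contained in the column span of D_b V₂} has positive Lebesgue measure, then the column span of V₁ is contained in the column span of V₂. -/

import Mathlib

/-!
For `x = V₁ c`, the patterns `a` with `D_a x ∈ span V₂` form a subspace `S` of `ℂ^p`,
and `x ∈ span V₂` iff `1 ∈ S`. When every `b q ≠ 0`, `D_a x ∈ span (D_b V₂)` means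
`a / b ∈ S`. So if `S` were proper, the set of the hypothesis would lie in the union of
`{(a, b) | a / b ∈ S}`, whose slices `b * S` are proper subspaces, and the null set where
some `b q` vanishes; by Fubini it would be null.
-/

open Matrix MeasureTheory

/-- The column span of an `m × n` complex matrix: the range of `x ↦ M x`. -/
noncomputable def colSpan {m n : ℕ} (M : Matrix (Fin m) (Fin n) ℂ) :
    Submodule ℂ (Fin m → ℂ) :=
  LinearMap.range M.mulVecLin

/-- The `m × m` diagonal matrix whose `t`-th diagonal entry is `a (l t)`. -/
def patDiag {m p : ℕ} (l : Fin m → Fin p) (a : Fin p → ℂ) :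
    Matrix (Fin m) (Fin m) ℂ :=
  Matrix.diagonal (a ∘ l)

section

variable {ι : Type*} [Fintype ι]

theorem volume_submodule_eq_zero {S : Submodule ℂ (ι → ℂ)} (hS : S ≠ ⊤) :
    volume (S : Set (ι → ℂ)) = 0 :=
  Measure.addHaar_submodule volume (S.restrictScalars ℝ)
    (by rwa [Ne, Submodule.restrictScalars_eq_top_iff])

theorem ae_forall_ne_zero : ∀ᵐ b : ι → ℂ, ∀ i, b i ≠ 0 := by
  classical
  simp only [ae_iff, not_forall, not_not, Set.ofPred_exists]
  refine measure_iUnion_null fun i =>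
    volume_submodule_eq_zero (S := LinearMap.ker (LinearMap.proj i)) fun h => ?_
  have hi : (Pi.single i 1 : ι → ℂ) ∈ LinearMap.ker (LinearMap.proj i) :=
    h ▸ Submodule.mem_top
  simp at hi

theorem volume_setOf_div_mem_eq_zero {S : Submodule ℂ (ι → ℂ)} (hS : S ≠ ⊤) :
    volume {ab : (ι → ℂ) × (ι → ℂ) | ab.1 / ab.2 ∈ S} = 0 := by
  have hmeas : MeasurableSet {ab : (ι → ℂ) × (ι → ℂ) | ab.1 / ab.2 ∈ S} :=
    (measurable_fst.div measurable_snd) S.closed_of_finiteDimensional.measurableSet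
  rw [Measure.volume_eq_prod, Measure.prod_apply_symm hmeas, lintegral_eq_zero_iff']
  · filter_upwards [ae_forall_ne_zero] with b hb
    refine measure_mono_null (t := LinearMap.mulLeft ℝ b '' S) ?_ ?_
    · intro a ha
      exact ⟨a / b, ha, funext fun i => by simp [mul_div_cancel₀ _ (hb i)]⟩
    · rw [Measure.addHaar_image_linearMap, volume_submodule_eq_zero hS, mul_zero]
  · exact (measurable_measure_prodMk_right hmeas).aemeasurable

end

theorem patDiag_mulVec {m p : ℕ} (l : Fin m → Fin p) (a : Fin p → ℂ) (x : Fin m → ℂ) :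
    patDiag l a *ᵥ x = (a ∘ l) * x :=
  funext fun t => by simp [patDiag, mulVec_diagonal]

theorem div_comp_mul_mem_colSpan {m n p : ℕ} {l : Fin m → Fin p}
    {V : Matrix (Fin m) (Fin n) ℂ} {a b : Fin p → ℂ} {x : Fin m → ℂ}
    (hb : ∀ q, b q ≠ 0)
    (h : (a ∘ l) * x ∈ colSpan (patDiag l b * V)) : ((a / b) ∘ l) * x ∈ colSpan V := by
  obtain ⟨c, hc⟩ := h
  refine ⟨c, funext fun t => ?_⟩
  have ht := congrFun hc t
  simp only [mulVecLin_apply, ← mulVec_mulVec, patDiag_mulVec, Pi.mul_apply,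
    Function.comp_apply, Pi.div_apply] at ht ⊢
  rw [div_mul_eq_mul_div, ← ht, mul_div_cancel_left₀ _ (hb (l t))]

theorem stmt10_general (m n₁ n₂ p : ℕ)
    (l : Fin m → Fin p)
    (V₁ : Matrix (Fin m) (Fin n₁) ℂ) (V₂ : Matrix (Fin m) (Fin n₂) ℂ)
    (hpos : 0 < volume {ab : (Fin p → ℂ) × (Fin p → ℂ) |
      colSpan (patDiag l ab.1 * V₁) ≤ colSpan (patDiag l ab.2 * V₂)}) :
    colSpan V₁ ≤ colSpan V₂ := by
  rintro _ ⟨c, rfl⟩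
  set x := V₁ *ᵥ c
  let S := (colSpan V₂).comap (LinearMap.mulRight ℂ x ∘ₗ LinearMap.funLeft ℂ ℂ l)
  suffices hS : S = ⊤ by
    have h1 : (1 : Fin m → ℂ) * x ∈ colSpan V₂ :=
      (hS ▸ Submodule.mem_top : (1 : Fin p → ℂ) ∈ S)
    rwa [one_mul] at h1
  by_contra hS
  have hnull : volume ({ab : (Fin p → ℂ) × (Fin p → ℂ) | ab.1 / ab.2 ∈ S} ∪
      Prod.snd ⁻¹' {b | ¬∀ q, b q ≠ 0}) = 0 :=
    measure_union_null (volume_setOf_div_mem_eq_zero hS)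
      (Measure.quasiMeasurePreserving_snd.preimage_null ae_forall_ne_zero)
  refine hpos.ne' (measure_mono_null (fun ⟨a, b⟩ hab => ?_) hnull)
  by_cases hb : ∀ q, b q ≠ 0
  · have hx : (a ∘ l) * x ∈ colSpan (patDiag l b * V₂) := by
      simpa only [mulVecLin_apply, ← mulVec_mulVec, patDiag_mulVec] using hab ⟨c, rfl⟩
    exact Or.inl (div_comp_mul_mem_colSpan hb hx)
  · exact Or.inr hb

theorem stmt10 (m n₁ n₂ p : ℕ) (hm : 0 < m) (hn₁ : 0 < n₁) (hn₂ : 0 < n₂) (hp : 0 < p)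
    (l : Fin m → Fin p)
    (V₁ : Matrix (Fin m) (Fin n₁) ℂ) (V₂ : Matrix (Fin m) (Fin n₂) ℂ)
    (hpos : 0 < volume {ab : (Fin p → ℂ) × (Fin p → ℂ) |
      colSpan (patDiag l ab.1 * V₁) ≤ colSpan (patDiag l ab.2 * V₂)}) :
    colSpan V₁ ≤ colSpan V₂ :=
  stmt10_general m n₁ n₂ p l V₁ V₂ hpos
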